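/- Let p < −2, set l = 2^{−1/p} (so l < √2), and choose h > 0 with 4h² + l²/2 = 1. Define the four points x₁ = (h, l/2, 0), x₂ = (h, −l/2, 0), x₃ = (−h, 0, l/2), x₄ = (−h, 0, −l/2) in ℝ³ and let E = {x₁, x₂, x₃, x₄}. Then V_p(E) = 1 (so cap_p(E) = 1), and for every a ∈ [0,1] the probability measure μ_a = (a/2)(δ_{x₁} + δ_{x₂}) + ((1−a)/2)(δ_{x₃} + δ_{x₄}) attains the supremum defining V_p(E). In particular, E admits a one-parameter family of distinct p-equilibrium measures, so the p-equilibrium measure of a nonregular 4-point set need not be unique. -/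
import Mathlib


open MeasureTheory Metric Set ENNReal Filter

noncomputable section

namespace Riesz

variable {E : Type*} [MeasurableSpace E] [PseudoMetricSpace E]

/-- Borel probability measures supported on `K` (i.e. giving full mass to `K`). -/
def probOn (K : Set E) : Set (Measure E) :=
  {μ | IsProbabilityMeasure μ ∧ μ Kᶜ = 0}

/-- The Riesz `p`-energy `∬ |x-y|^{-p} dμ dμ` of a measure `μ`, valued in `ℝ≥0∞`.
(The kernel `(dist x y)^{-p}`, computed in `ℝ≥0∞`, is `∞` on the diagonal when `p > 0`
and `0` on the diagonal when `p < 0`.) -/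
def energyOf (p : ℝ) (μ : Measure E) : ℝ≥0∞ :=
  ∫⁻ z : E × E, (ENNReal.ofReal (dist z.1 z.2)) ^ (-p) ∂(μ.prod μ)

/-- The Riesz `p`-energy of a set `K`, for `p ≠ 0`: a supremum over probability measures
on `K` when `p < 0`, an infimum when `p > 0`.  (For `K = ∅` this gives `0` when `p < 0`
and `∞` when `p > 0`.) -/
def energy (p : ℝ) (K : Set E) : ℝ≥0∞ :=
  if p < 0 then ⨆ μ ∈ probOn K, energyOf p μ
  else ⨅ μ ∈ probOn K, energyOf p μ

/-- The logarithmic energy `∬ log (1/|x-y|) dμ dμ` of a measure, as an extended real: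
the positive part (with value `∞` on the diagonal) minus the negative part. -/
def logEnergyOf (μ : Measure E) : EReal :=
  ((∫⁻ z : E × E, (if dist z.1 z.2 = 0 then ⊤ else
      ENNReal.ofReal (Real.log (1 / dist z.1 z.2))) ∂(μ.prod μ) : ℝ≥0∞) : EReal)
  - ((∫⁻ z : E × E, ENNReal.ofReal (Real.log (dist z.1 z.2)) ∂(μ.prod μ) : ℝ≥0∞) : EReal)

/-- The logarithmic energy of a set `K`: infimum over probability measures on `K`. -/
def logEnergy (K : Set E) : EReal :=
  ⨅ μ ∈ probOn K, logEnergyOf μ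

/-- The Riesz `p`-capacity of a set: `V_p(K)^{-1/p}` for `p ≠ 0`, and the logarithmic
capacity `exp(-V_log(K))` for `p = 0`. -/
def cap (p : ℝ) (K : Set E) : ℝ :=
  if p = 0 then
    (if logEnergy K = ⊤ then 0 else Real.exp (-(logEnergy K).toReal))
  else ((energy p K).toReal) ^ (-1 / p)

/-- `μ` is a `p`-equilibrium measure of `K`: a probability measure on `K` whose
`p`-energy attains the optimal `p`-energy of `K`. -/
def IsEquilibrium (p : ℝ) (K : Set E) (μ : Measure E) : Prop :=
  μ ∈ probOn K ∧ energyOf p μ = energy p K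

/-- A set `Z` has inner `p`-capacity zero: every compact subset has `p`-capacity zero. -/
def InnerCapZero (p : ℝ) (Z : Set E) : Prop :=
  ∀ Z' ⊆ Z, IsCompact Z' → cap p Z' = 0

end Riesz

end

section S19aux

variable {X : Type*} [MeasurableSpace X] [MetricSpace X] [BorelSpace X]
  [SecondCountableTopology X]

lemma S19.kmeas (p : ℝ) :
    Measurable (fun z : X × X => (ENNReal.ofReal (dist z.1 z.2)) ^ (-p)) :=
  (measurable_fst.dist measurable_snd).ennreal_ofReal.pow_const (-p)

lemma S19.energyOf4 (p : ℝ) (c₁ c₂ c₃ c₄ : ℝ≥0∞) (y₁ y₂ y₃ y₄ : X) :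
    Riesz.energyOf p (c₁ • Measure.dirac y₁ + c₂ • Measure.dirac y₂ + c₃ • Measure.dirac y₃ +
      c₄ • Measure.dirac y₄) =
    c₁ * c₁ * (ENNReal.ofReal (dist y₁ y₁)) ^ (-p) + c₁ * c₂ * (ENNReal.ofReal (dist y₁ y₂)) ^ (-p) +
    c₁ * c₃ * (ENNReal.ofReal (dist y₁ y₃)) ^ (-p) + c₁ * c₄ * (ENNReal.ofReal (dist y₁ y₄)) ^ (-p) +
    c₂ * c₁ * (ENNReal.ofReal (dist y₂ y₁)) ^ (-p) + c₂ * c₂ * (ENNReal.ofReal (dist y₂ y₂)) ^ (-p) +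
    c₂ * c₃ * (ENNReal.ofReal (dist y₂ y₃)) ^ (-p) + c₂ * c₄ * (ENNReal.ofReal (dist y₂ y₄)) ^ (-p) +
    c₃ * c₁ * (ENNReal.ofReal (dist y₃ y₁)) ^ (-p) + c₃ * c₂ * (ENNReal.ofReal (dist y₃ y₂)) ^ (-p) +
    c₃ * c₃ * (ENNReal.ofReal (dist y₃ y₃)) ^ (-p) + c₃ * c₄ * (ENNReal.ofReal (dist y₃ y₄)) ^ (-p) +
    c₄ * c₁ * (ENNReal.ofReal (dist y₄ y₁)) ^ (-p) + c₄ * c₂ * (ENNReal.ofReal (dist y₄ y₂)) ^ (-p) +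
    c₄ * c₃ * (ENNReal.ofReal (dist y₄ y₃)) ^ (-p) + c₄ * c₄ * (ENNReal.ofReal (dist y₄ y₄)) ^ (-p) := by
  rw [Riesz.energyOf, MeasureTheory.lintegral_prod _ (S19.kmeas p).aemeasurable]
  simp only [MeasureTheory.lintegral_add_measure, MeasureTheory.lintegral_smul_measure,
    MeasureTheory.lintegral_dirac]
  ring

/-- Representation of a measure supported on four distinct points. -/
lemma S19.rep (μ : MeasureTheory.Measure X) (y₁ y₂ y₃ y₄ : X)
    (h12 : y₁ ≠ y₂) (h13 : y₁ ≠ y₃) (h14 : y₁ ≠ y₄) (h23 : y₂ ≠ y₃) (h24 : y₂ ≠ y₄)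
    (h34 : y₃ ≠ y₄) (hnull : μ ({y₁, y₂, y₃, y₄} : Set X)ᶜ = 0) :
    μ = μ {y₁} • MeasureTheory.Measure.dirac y₁ + μ {y₂} • MeasureTheory.Measure.dirac y₂ +
      μ {y₃} • MeasureTheory.Measure.dirac y₃ + μ {y₄} • MeasureTheory.Measure.dirac y₄ := by
  have hres : μ.restrict ({y₁, y₂, y₃, y₄} : Set X) = μ :=
    MeasureTheory.Measure.restrict_eq_self_of_ae_mem (MeasureTheory.mem_ae_iff.mpr hnull)
  have hU : ({y₁, y₂, y₃, y₄} : Set X) = {y₁} ∪ ({y₂} ∪ ({y₃} ∪ {y₄})) := by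
    rw [Set.insert_eq, Set.insert_eq, Set.insert_eq]
  calc μ = μ.restrict ({y₁} ∪ ({y₂} ∪ ({y₃} ∪ {y₄}))) := by rw [← hU, hres]
    _ = _ := by
        rw [MeasureTheory.Measure.restrict_union (by simp [h12, h13, h14]) (by measurability),
          MeasureTheory.Measure.restrict_union (by simp [h23, h24]) (by measurability),
          MeasureTheory.Measure.restrict_union (by simp [h34]) (by measurability)]
        simp only [MeasureTheory.Measure.restrict_singleton]
        rw [← add_assoc, ← add_assoc]

end S19aux

open MeasureTheory in
/-- Nonuniqueness of equilibrium measures on a nonregular 4-point set ("kite"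
tetrahedron): for `p < -2`, `l = 2^(-1/p)`, `4h² + l²/2 = 1`, the vertex set `E` has
`p`-energy `1` (so `cap_p(E) = 1`) and, for every `a ∈ [0,1]`, the measure
`μ_a = (a/2)(δ_{x₁}+δ_{x₂}) + ((1-a)/2)(δ_{x₃}+δ_{x₄})` is a `p`-equilibrium measure;
distinct parameters give distinct measures. -/
theorem statement19 (p l ht : ℝ) (hp : p < -2) (hl : l = (2 : ℝ) ^ (-1 / p))
    (hh : 0 < ht) (hh2 : 4 * ht ^ 2 + l ^ 2 / 2 = 1)
    (x₁ x₂ x₃ x₄ : EuclideanSpace ℝ (Fin 3))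
    (h₁ : x₁ = (EuclideanSpace.equiv (Fin 3) ℝ).symm ![ht, l / 2, 0])
    (h₂ : x₂ = (EuclideanSpace.equiv (Fin 3) ℝ).symm ![ht, -(l / 2), 0])
    (h₃ : x₃ = (EuclideanSpace.equiv (Fin 3) ℝ).symm ![-ht, 0, l / 2])
    (h₄ : x₄ = (EuclideanSpace.equiv (Fin 3) ℝ).symm ![-ht, 0, -(l / 2)]) :
    Riesz.energy p ({x₁, x₂, x₃, x₄} : Set (EuclideanSpace ℝ (Fin 3))) = 1 ∧
    Riesz.cap p ({x₁, x₂, x₃, x₄} : Set (EuclideanSpace ℝ (Fin 3))) = 1 ∧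
    (∀ a : ℝ, a ∈ Set.Icc (0 : ℝ) 1 →
      Riesz.IsEquilibrium p ({x₁, x₂, x₃, x₄} : Set (EuclideanSpace ℝ (Fin 3)))
        (ENNReal.ofReal (a / 2) • (Measure.dirac x₁ + Measure.dirac x₂) +
          ENNReal.ofReal ((1 - a) / 2) • (Measure.dirac x₃ + Measure.dirac x₄))) ∧
    (∀ a ∈ Set.Icc (0 : ℝ) 1, ∀ b ∈ Set.Icc (0 : ℝ) 1, a ≠ b →
      (ENNReal.ofReal (a / 2) • (Measure.dirac x₁ + Measure.dirac x₂) +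
          ENNReal.ofReal ((1 - a) / 2) • (Measure.dirac x₃ + Measure.dirac x₄) :
            Measure (EuclideanSpace ℝ (Fin 3))) ≠
        ENNReal.ofReal (b / 2) • (Measure.dirac x₁ + Measure.dirac x₂) +
          ENNReal.ofReal ((1 - b) / 2) • (Measure.dirac x₃ + Measure.dirac x₄)) := by
  have hp0 : p ≠ 0 := by linarith
  have hpneg : p < 0 := by linarith
  have hl0 : 0 < l := hl ▸ Real.rpow_pos_of_pos (by norm_num) _
  -- distances
  have d12 : dist x₁ x₂ = l := by
    subst h₁ h₂; rw [EuclideanSpace.dist_eq]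
    simp [Fin.sum_univ_three, Real.dist_eq, sq_abs]
    exact Real.sqrt_sq hl0.le
  have d34 : dist x₃ x₄ = l := by
    subst h₃ h₄; rw [EuclideanSpace.dist_eq]
    simp [Fin.sum_univ_three, Real.dist_eq, sq_abs]
    exact Real.sqrt_sq hl0.le
  have dcross : dist x₁ x₃ = 1 ∧ dist x₁ x₄ = 1 ∧ dist x₂ x₃ = 1 ∧ dist x₂ x₄ = 1 := by
    subst h₁ h₂ h₃ h₄
    refine ⟨?_, ?_, ?_, ?_⟩ <;>
    · rw [EuclideanSpace.dist_eq]
      simp [Fin.sum_univ_three, Real.dist_eq, sq_abs]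
      linarith [show (ht + ht)^2 = 4*ht^2 by ring]
  obtain ⟨d13, d14, d23, d24⟩ := dcross
  -- distinctness
  have n12 : x₁ ≠ x₂ := by rw [← dist_pos, d12]; exact hl0
  have n34 : x₃ ≠ x₄ := by rw [← dist_pos, d34]; exact hl0
  have n13 : x₁ ≠ x₃ := by rw [← dist_pos, d13]; norm_num
  have n14 : x₁ ≠ x₄ := by rw [← dist_pos, d14]; norm_num
  have n23 : x₂ ≠ x₃ := by rw [← dist_pos, d23]; norm_num
  have n24 : x₂ ≠ x₄ := by rw [← dist_pos, d24]; norm_num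
  -- kernel values
  have kl : (ENNReal.ofReal l) ^ (-p) = 2 := by
    rw [hl, ← ENNReal.ofReal_rpow_of_pos (by norm_num), ← ENNReal.rpow_mul,
      show (-1)/p * (-p) = 1 by field_simp, ENNReal.rpow_one]
    norm_num
  have k1 : (ENNReal.ofReal (1:ℝ)) ^ (-p) = 1 := by simp
  have k0 : ∀ y : EuclideanSpace ℝ (Fin 3), (ENNReal.ofReal (dist y y)) ^ (-p) = 0 := by
    intro y
    rw [dist_self, ENNReal.ofReal_zero, ENNReal.zero_rpow_of_pos (by linarith)]
  -- energy value of a 4-atom measure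
  have hval : ∀ w₁ w₂ w₃ w₄ : ℝ≥0∞,
      Riesz.energyOf p (w₁ • Measure.dirac x₁ + w₂ • Measure.dirac x₂ + w₃ • Measure.dirac x₃ +
        w₄ • Measure.dirac x₄) =
      2 * (w₁ * w₂) + 2 * (w₂ * w₁) + 2 * (w₃ * w₄) + 2 * (w₄ * w₃) +
        (w₁ * w₃ + w₁ * w₄ + w₂ * w₃ + w₂ * w₄ + w₃ * w₁ + w₃ * w₂ + w₄ * w₁ + w₄ * w₂) := by
    intro w₁ w₂ w₃ w₄
    rw [S19.energyOf4, d12, d34, d13, d14, d23, d24,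
      dist_comm x₂ x₁, d12, dist_comm x₄ x₃, d34, dist_comm x₃ x₁, d13,
      dist_comm x₄ x₁, d14, dist_comm x₃ x₂, d23, dist_comm x₄ x₂, d24,
      kl, k1, k0, k0, k0, k0]
    ring
  -- the measures μ_a in four-atom form
  have hform : ∀ c d : ℝ≥0∞,
      c • (Measure.dirac x₁ + Measure.dirac x₂) + d • (Measure.dirac x₃ + Measure.dirac x₄) =
      c • Measure.dirac x₁ + c • Measure.dirac x₂ + d • Measure.dirac x₃ +
        d • Measure.dirac x₄ := by
    intro c d
    rw [smul_add, smul_add, ← add_assoc]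
  -- mass identity
  have hsum : ∀ a : ℝ, a ∈ Set.Icc (0:ℝ) 1 →
      ENNReal.ofReal (a/2) + ENNReal.ofReal (a/2) + ENNReal.ofReal ((1-a)/2) +
        ENNReal.ofReal ((1-a)/2) = 1 := by
    intro a ⟨ha0, ha1⟩
    rw [← ENNReal.ofReal_add (by linarith) (by linarith),
      ← ENNReal.ofReal_add (by linarith) (by linarith),
      ← ENNReal.ofReal_add (by linarith) (by linarith),
      show a/2 + a/2 + (1-a)/2 + (1-a)/2 = 1 by ring, ENNReal.ofReal_one]
  -- μ_a is a probability measure on E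
  have hmem : ∀ a : ℝ, a ∈ Set.Icc (0:ℝ) 1 →
      (ENNReal.ofReal (a / 2) • (Measure.dirac x₁ + Measure.dirac x₂) +
        ENNReal.ofReal ((1 - a) / 2) • (Measure.dirac x₃ + Measure.dirac x₄)) ∈
      Riesz.probOn ({x₁, x₂, x₃, x₄} : Set (EuclideanSpace ℝ (Fin 3))) := by
    intro a ha
    constructor
    · constructor
      rw [hform]
      have := hsum a ha
      simp only [Measure.add_apply, Measure.smul_apply, measure_univ, smul_eq_mul, mul_one]
      exact this
    · rw [hform]
      have m1 : x₁ ∈ ({x₁, x₂, x₃, x₄} : Set (EuclideanSpace ℝ (Fin 3))) := by simp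
      have m2 : x₂ ∈ ({x₁, x₂, x₃, x₄} : Set (EuclideanSpace ℝ (Fin 3))) := by simp
      have m3 : x₃ ∈ ({x₁, x₂, x₃, x₄} : Set (EuclideanSpace ℝ (Fin 3))) := by simp
      have m4 : x₄ ∈ ({x₁, x₂, x₃, x₄} : Set (EuclideanSpace ℝ (Fin 3))) := by simp
      simp [Measure.dirac_apply, Set.indicator_apply, m1, m2, m3, m4]
  -- energy of μ_a is 1
  have henergy : ∀ a : ℝ, a ∈ Set.Icc (0:ℝ) 1 →
      Riesz.energyOf p (ENNReal.ofReal (a / 2) • (Measure.dirac x₁ + Measure.dirac x₂) +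
        ENNReal.ofReal ((1 - a) / 2) • (Measure.dirac x₃ + Measure.dirac x₄)) = 1 := by
    intro a ha
    rw [hform, hval]
    set c := ENNReal.ofReal (a/2)
    set d := ENNReal.ofReal ((1-a)/2)
    have : 2 * (c * c) + 2 * (c * c) + 2 * (d * d) + 2 * (d * d) +
        (c * d + c * d + c * d + c * d + d * c + d * c + d * c + d * c) =
        (c + c + d + d) * (c + c + d + d) := by ring
    rw [this, hsum a ha, one_mul]
  -- upper bound
  have hub : ∀ μ ∈ Riesz.probOn ({x₁, x₂, x₃, x₄} : Set (EuclideanSpace ℝ (Fin 3))),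
      Riesz.energyOf p μ ≤ 1 := by
    rintro μ ⟨hprob, hnull⟩
    have hrep := S19.rep μ x₁ x₂ x₃ x₄ n12 n13 n14 n23 n24 n34 hnull
    set w₁ := μ {x₁}; set w₂ := μ {x₂}; set w₃ := μ {x₃}; set w₄ := μ {x₄}
    have hw : w₁ + w₂ + w₃ + w₄ = 1 := by
      have := congrArg (fun m : Measure (EuclideanSpace ℝ (Fin 3)) => m Set.univ) hrep
      simp only [Measure.add_apply, Measure.smul_apply, measure_univ, smul_eq_mul,
        mul_one] at this
      exact this.symm
    have h1t : w₁ ≠ ⊤ := by intro h; rw [h] at hw; simp at hw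
    have h2t : w₂ ≠ ⊤ := by intro h; rw [h] at hw; simp at hw
    have h3t : w₃ ≠ ⊤ := by intro h; rw [h] at hw; simp at hw
    have h4t : w₄ ≠ ⊤ := by intro h; rw [h] at hw; simp at hw
    conv_lhs => rw [hrep]
    rw [hval]
    clear_value w₁ w₂ w₃ w₄
    lift w₁ to NNReal using h1t
    lift w₂ to NNReal using h2t
    lift w₃ to NNReal using h3t
    lift w₄ to NNReal using h4t
    rw [← ENNReal.coe_add, ← ENNReal.coe_add, ← ENNReal.coe_add, ENNReal.coe_eq_one] at hw
    have hw' : (w₁ : ℝ) + w₂ + w₃ + w₄ = 1 := by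
      have := congrArg (NNReal.toReal) hw
      push_cast at this
      exact this
    have key : 2 * (w₁ * w₂) + 2 * (w₂ * w₁) + 2 * (w₃ * w₄) + 2 * (w₄ * w₃) +
        (w₁ * w₃ + w₁ * w₄ + w₂ * w₃ + w₂ * w₄ + w₃ * w₁ + w₃ * w₂ + w₄ * w₁ + w₄ * w₂) ≤
        (1 : NNReal) := by
      rw [← NNReal.coe_le_coe]
      push_cast
      nlinarith [sq_nonneg ((w₁:ℝ) - w₂), sq_nonneg ((w₃:ℝ) - w₄),
        w₁.coe_nonneg, w₂.coe_nonneg, w₃.coe_nonneg, w₄.coe_nonneg]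
    exact_mod_cast key
  -- main energy identity
  have hE : Riesz.energy p ({x₁, x₂, x₃, x₄} : Set (EuclideanSpace ℝ (Fin 3))) = 1 := by
    rw [Riesz.energy, if_pos hpneg]
    refine le_antisymm (iSup₂_le hub) ?_
    have h0 : (0:ℝ) ∈ Set.Icc (0:ℝ) 1 := by norm_num
    exact le_iSup₂_of_le _ (hmem 0 h0) (henergy 0 h0).ge
  refine ⟨hE, ?_, ?_, ?_⟩
  · rw [Riesz.cap, if_neg hp0, hE, ENNReal.toReal_one, Real.one_rpow]
  · intro a ha
    exact ⟨hmem a ha, by rw [henergy a ha, hE]⟩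
  · intro a ha b hb hab heq
    have := Measure.ext_iff.mp heq {x₁} (measurableSet_singleton _)
    simp [Measure.dirac_apply, Set.indicator_apply, Ne.symm n12, Ne.symm n13,
      Ne.symm n14] at this
    have ha2 : a / 2 = b / 2 := by
      rw [ENNReal.ofReal_eq_ofReal_iff (by linarith [ha.1]) (by linarith [hb.1])] at this
      exact this
    exact hab (by linarith)
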